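/- Let c ≥ 0 and let θ : ℝ → ℝ be differentiable with θ'(λ) ≤ -c·θ(λ)² for all λ (the Raychaudhuri inequality under the null energy condition) and θ(0) = 0 (the surface at affine parameter 0 is marginal). Let A : ℝ → ℝ be positive and differentiable with A'(λ) = θ(λ)·A(λ) for all λ (cross-sectional area along the null congruence, whose logarithmic derivative is the expansion). Then θ(λ) ≤ 0 for all λ ≥ 0 and θ(λ) ≥ 0 for all λ ≤ 0, and A(λ) ≤ A(0) for every λ ∈ ℝ: cross-sectional areas along the null congruence are nondecreasing toward the marginal surface. -/
import Mathlib


/-- **Rule (i): focusing toward a marginal surface.** Let `c ≥ 0` and let the expansion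
`θ : ℝ → ℝ` be differentiable with `θ' ≤ -c θ²` (Raychaudhuri plus NEC) and `θ 0 = 0`
(marginality at affine parameter `0`). Let the cross-sectional area `A` be positive and
differentiable with `A' = θ A`. Then `θ ≤ 0` for nonnegative affine parameter, `θ ≥ 0`
for nonpositive affine parameter, and `A l ≤ A 0` everywhere: cross-sectional areas along
the null congruence are nondecreasing toward the marginal surface. -/
theorem area_nondecreasing_toward_marginal_surface
    (c : ℝ) (hc : 0 ≤ c) (θ A : ℝ → ℝ)
    (hθdiff : Differentiable ℝ θ)
    (hray : ∀ l : ℝ, deriv θ l ≤ -c * (θ l) ^ 2)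
    (hmarg : θ 0 = 0)
    (hApos : ∀ l : ℝ, 0 < A l)
    (hAdiff : Differentiable ℝ A)
    (hexp : ∀ l : ℝ, deriv A l = θ l * A l) :
    (∀ l : ℝ, 0 ≤ l → θ l ≤ 0) ∧ (∀ l : ℝ, l ≤ 0 → 0 ≤ θ l) ∧ (∀ l : ℝ, A l ≤ A 0) := by
  have hθanti : Antitone θ := by
    apply antitone_of_deriv_nonpos hθdiff
    intro x
    have := hray x
    nlinarith [sq_nonneg (θ x)]
  have h1 : ∀ l : ℝ, 0 ≤ l → θ l ≤ 0 := fun l hl => hmarg ▸ hθanti hl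
  have h2 : ∀ l : ℝ, l ≤ 0 → 0 ≤ θ l := fun l hl => hmarg ▸ hθanti hl
  refine ⟨h1, h2, fun l => ?_⟩
  rcases le_total 0 l with hl | hl
  · have hA : AntitoneOn A (Set.Ici (0 : ℝ)) := by
      apply antitoneOn_of_deriv_nonpos (convex_Ici 0) hAdiff.continuous.continuousOn
        (hAdiff.differentiableOn)
      intro x hx
      rw [interior_Ici] at hx
      rw [hexp x]
      exact mul_nonpos_of_nonpos_of_nonneg (h1 x (le_of_lt hx)) (le_of_lt (hApos x))
    exact hA Set.self_mem_Ici hl hl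
  · have hA : MonotoneOn A (Set.Iic (0 : ℝ)) := by
      apply monotoneOn_of_deriv_nonneg (convex_Iic 0) hAdiff.continuous.continuousOn
        (hAdiff.differentiableOn)
      intro x hx
      rw [interior_Iic] at hx
      rw [hexp x]
      exact mul_nonneg (h2 x (le_of_lt hx)) (le_of_lt (hApos x))
    exact hA hl Set.self_mem_Iic hl
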